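/- For every natural number j ≥ 1, the series ∑_{r=1}^∞ arctan( F_{2j}·√(5·L_{4j})·L_{4jr−2j} / L_{8jr−4j} ) converges and its sum equals π/2. -/

import Mathlib

def lucas : ℕ → ℕ
  | 0 => 2
  | 1 => 1
  | n + 2 => lucas (n + 1) + lucas n

/-!
Put `t_r = √5 F_{4jr} / √L_{4j}`, an increasing unbounded sequence with `t_0 = 0`. For `n = 4jr`
the identities `F_{n+4j} - F_n = F_{2j} L_{n+2j}` and `5 F_{n+4j} F_n + L_{4j} = L_{2n+4j}` give
`(t_{r+1} - t_r) / (1 + t_{r+1} t_r)` = the argument of the `r`-th arctangent, so that term equals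
`arctan t_{r+1} - arctan t_r` and the series telescopes to `π/2 - arctan t_0 = π/2`.
-/

open Real Filter Topology
open scoped goldenRatio

theorem lucas_pos : ∀ n, 0 < lucas n
  | 0 => by decide
  | 1 => by decide
  | n + 2 => Nat.add_pos_left (lucas_pos (n + 1)) _

theorem coe_lucas_eq (n : ℕ) : (lucas n : ℝ) = φ ^ n + ψ ^ n := by
  induction n using Nat.twoStepInduction with
  | zero => norm_num [lucas]
  | one => simp [lucas]
  | more n ih₁ ih₂ =>
    rw [lucas, Nat.cast_add, ih₁, ih₂]
    linear_combination φ ^ n * goldenRatio_sq + ψ ^ n * goldenConj_sq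
      - (φ ^ n + ψ ^ n) / 2 * sq_sqrt (show (0 : ℝ) ≤ 5 by norm_num)

theorem sqrt_five_mul_fib (n : ℕ) : √5 * (Nat.fib n : ℝ) = φ ^ n - ψ ^ n := by
  rw [coe_fib_eq, mul_div_cancel₀ _ (by positivity)]

theorem goldenRatio_pow_mul_goldenConj_pow_of_even {n : ℕ} (hn : Even n) :
    φ ^ n * ψ ^ n = 1 := by
  rw [← mul_pow, goldenRatio_mul_goldenConj, hn.neg_one_pow]

theorem fib_add_two_mul_of_even (n : ℕ) {k : ℕ} (hk : Even k) :
    Nat.fib (n + 2 * k) = Nat.fib n + Nat.fib k * lucas (n + k) := by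
  have h5 : √5 ≠ 0 := by positivity
  suffices √5 * (Nat.fib (n + 2 * k) : ℝ) = √5 * (Nat.fib n + Nat.fib k * lucas (n + k)) by
    exact_mod_cast mul_left_cancel₀ h5 this
  rw [mul_add, ← mul_assoc, sqrt_five_mul_fib, sqrt_five_mul_fib, sqrt_five_mul_fib, coe_lucas_eq]
  linear_combination (φ ^ n - ψ ^ n) * goldenRatio_pow_mul_goldenConj_pow_of_even hk

theorem five_mul_fib_add_mul_fib_add_lucas_of_even (m : ℕ) {n : ℕ} (hn : Even n) :
    5 * Nat.fib (m + n) * Nat.fib n + lucas m = lucas (m + 2 * n) := by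
  suffices (√5 * Nat.fib (m + n)) * (√5 * Nat.fib n) + (lucas m : ℝ) = lucas (m + 2 * n) by
    rw [mul_mul_mul_comm, mul_self_sqrt (by norm_num), ← mul_assoc] at this
    exact_mod_cast this
  rw [sqrt_five_mul_fib, sqrt_five_mul_fib, coe_lucas_eq, coe_lucas_eq]
  linear_combination -(φ ^ m + ψ ^ m) * goldenRatio_pow_mul_goldenConj_pow_of_even hn

theorem arctan_sub_arctan {x y : ℝ} (h : -1 < x * y) :
    arctan x - arctan y = arctan ((x - y) / (1 + x * y)) := by
  rw [sub_eq_add_neg, ← arctan_neg, arctan_add (by linarith)]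
  ring_nf

theorem hasSum_arctan_sub_arctan_of_monotone {t : ℕ → ℝ} (hmono : Monotone t)
    (htop : Tendsto t atTop atTop) :
    HasSum (fun r => arctan (t (r + 1)) - arctan (t r)) (π / 2 - arctan (t 0)) := by
  have hnonneg (r : ℕ) : 0 ≤ arctan (t (r + 1)) - arctan (t r) :=
    sub_nonneg.2 (arctan_strictMono.monotone (hmono r.le_succ))
  rw [hasSum_iff_tendsto_nat_of_nonneg hnonneg]
  simp_rw [Finset.sum_range_sub (fun r => arctan (t r))]
  exact ((tendsto_arctan_atTop.mono_right nhdsWithin_le_nhds).comp htop).sub_const _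

theorem tendsto_fib_atTop : Tendsto Nat.fib atTop atTop :=
  (tendsto_add_atTop_iff_nat 2).1 Nat.fib_add_two_strictMono.tendsto_atTop

theorem arctan_fib_mul_lucas_div_lucas_eq_sub (j r : ℕ) :
    arctan (Nat.fib (2 * j) * √(5 * lucas (4 * j)) * lucas (4 * j * r + 2 * j) /
        lucas (8 * j * r + 4 * j)) =
      arctan (√5 * Nat.fib (4 * j * (r + 1)) / √(lucas (4 * j))) -
        arctan (√5 * Nat.fib (4 * j * r) / √(lucas (4 * j))) := by
  have hdiff := fib_add_two_mul_of_even (4 * j * r) (even_two_mul j)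
  have hprod := five_mul_fib_add_mul_fib_add_lucas_of_even (4 * j) (n := 4 * j * r)
    ⟨2 * j * r, by ring⟩
  rw [show 4 * j * r + 2 * (2 * j) = 4 * j * (r + 1) by ring] at hdiff
  rw [show 4 * j + 4 * j * r = 4 * j * (r + 1) by ring,
    show 4 * j + 2 * (4 * j * r) = 8 * j * r + 4 * j by ring] at hprod
  have hL : (0 : ℝ) < lucas (4 * j) := Nat.cast_pos.2 (lucas_pos _)
  have hsub : √5 * Nat.fib (4 * j * (r + 1)) / √(lucas (4 * j)) -
      √5 * Nat.fib (4 * j * r) / √(lucas (4 * j)) =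
        √5 * Nat.fib (2 * j) * lucas (4 * j * r + 2 * j) / √(lucas (4 * j)) := by
    rw [hdiff]; push_cast; ring
  have hone : 1 + √5 * Nat.fib (4 * j * (r + 1)) / √(lucas (4 * j)) *
      (√5 * Nat.fib (4 * j * r) / √(lucas (4 * j))) =
        lucas (8 * j * r + 4 * j) / lucas (4 * j) := by
    rw [← hprod, div_mul_div_comm, mul_mul_mul_comm, mul_self_sqrt (by norm_num),
      mul_self_sqrt hL.le]
    field_simp
    push_cast
    ring
  rw [arctan_sub_arctan (neg_one_lt_zero.trans_le (by positivity)), hsub, hone,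
    sqrt_mul (by norm_num)]
  congr 1
  field_simp
  rw [sq_sqrt hL.le]
  ring

theorem stmt9 (j : ℕ) (hj : 1 ≤ j) :
    HasSum (fun r : ℕ =>
        Real.arctan ((Nat.fib (2 * j) : ℝ) * Real.sqrt (5 * (lucas (4 * j) : ℝ)) *
            (lucas (4 * j * (1 + r) - 2 * j) : ℝ) /
          (lucas (8 * j * (1 + r) - 4 * j) : ℝ)))
      (Real.pi / 2) := by
  set t : ℕ → ℝ := fun r => √5 * Nat.fib (4 * j * r) / √(lucas (4 * j))
  have hmono : Monotone t := fun a b hab => by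
    dsimp only [t]
    gcongr
  have htop : Tendsto t atTop atTop :=
    ((tendsto_natCast_atTop_atTop.comp (tendsto_fib_atTop.comp
      (tendsto_id.const_mul_atTop' (by omega)))).const_mul_atTop (by positivity)).atTop_div_const
      (sqrt_pos.2 (Nat.cast_pos.2 (lucas_pos _)))
  convert hasSum_arctan_sub_arctan_of_monotone hmono htop using 1
  · funext r
    rw [Nat.sub_eq_of_eq_add (by ring : 4 * j * (1 + r) = 4 * j * r + 2 * j + 2 * j),
      Nat.sub_eq_of_eq_add (by ring : 8 * j * (1 + r) = 8 * j * r + 4 * j + 4 * j),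
      arctan_fib_mul_lucas_div_lucas_eq_sub]
  · simp [t]
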